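/- For every pair of odd integers k_0 and k with 3 ≤ k_0 ≤ k, there exists an integer m and reals ω_1, …, ω_m such that Σ_{i∈[m]} ω_i^ℓ = 0 for every odd integer ℓ ≠ k_0 with 3 ≤ ℓ ≤ k, and Σ_{i∈[m]} ω_i^{k_0} > 0. -/

import Mathlib

open MeasureTheory

/-- A kernel: a bounded measurable symmetric real function (its values on `[0,1]²` are the
relevant ones). -/
structure Kernel : Type where
  toFun : ℝ → ℝ → ℝ
  symm : ∀ x y, toFun x y = toFun y x
  measurable : Measurable (Function.uncurry toFun)
  bounded : ∃ C : ℝ, ∀ x y, |toFun x y| ≤ C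

/-- A kernel is nonzero if it is not a.e. zero on `[0,1]²`. -/
def Kernel.Nonzero (U : Kernel) : Prop :=
  ¬ (∀ᵐ p : ℝ × ℝ ∂(volume.restrict ((Set.Icc (0:ℝ) 1) ×ˢ (Set.Icc (0:ℝ) 1))),
      U.toFun p.1 p.2 = 0)

/-- A kernel is balanced if its marginals vanish a.e. -/
def Kernel.Balanced (U : Kernel) : Prop :=
  ∀ᵐ x ∂(volume.restrict (Set.Icc (0:ℝ) 1)), (∫ y in Set.Icc (0:ℝ) 1, U.toFun x y) = 0

/-- The product of the kernel values over the edges of a graph. -/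
noncomputable def edgeProd {V : Type} (H : SimpleGraph V) (U : Kernel) (x : V → ℝ) : ℝ :=
  ∏ᶠ e ∈ H.edgeSet, Sym2.lift ⟨fun u v => U.toFun (x u) (x v), fun u v => U.symm (x u) (x v)⟩ e

/-- The homomorphism density `t(H, U)` of a finite simple graph in a kernel. -/
noncomputable def homDensity {V : Type} [Fintype V] (H : SimpleGraph V) (U : Kernel) : ℝ :=
  ∫ x in (Set.univ.pi fun _ : V => Set.Icc (0:ℝ) 1), edgeProd H U x

open Classical in
/-- The rooted homomorphism density `t^H_U(z)` of a graph `H` rooted at `w`. -/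
noncomputable def rootedDensity {V : Type} [Fintype V] (H : SimpleGraph V) (w : V)
    (U : Kernel) (z : ℝ) : ℝ :=
  ∫ x in (Set.univ.pi fun _ : {v : V // v ≠ w} => Set.Icc (0:ℝ) 1),
    edgeProd H U (fun v => if h : v = w then z else x ⟨v, h⟩)

/-- A bundled finite simple graph. -/
structure FinGraph : Type 1 where
  V : Type
  fintypeV : Fintype V
  G : SimpleGraph V

attribute [instance] FinGraph.fintypeV

def FinGraph.of {V : Type} [h : Fintype V] (G : SimpleGraph V) : FinGraph := ⟨V, h, G⟩

noncomputable def FinGraph.density (G : FinGraph) (U : Kernel) : ℝ := homDensity G.G U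

/-- Number of edges of a bundled finite graph. -/
noncomputable def FinGraph.edges (G : FinGraph) : ℕ := G.G.edgeSet.ncard

instance finiteSubgraph {V : Type} [Finite V] (G : SimpleGraph V) : Finite G.Subgraph := by
  classical
  exact Finite.of_injective (fun G' => (G'.verts, G'.Adj))
    (fun a b h => SimpleGraph.Subgraph.ext (congrArg Prod.fst h) (congrArg Prod.snd h))

open Classical in
/-- The multiset of all subgraphs of `G` having exactly `l` edges. -/
noncomputable def FinGraph.subs (G : FinGraph) (l : ℕ) : Multiset FinGraph :=
  ((Set.toFinite {G' : G.G.Subgraph | G'.edgeSet.ncard = l}).toFinset.val).map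
    fun G' => FinGraph.of G'.coe

/-- `D` is an `l`-deck: a multiset of graphs each with exactly `l` edges. -/
def IsDeck (D : Multiset FinGraph) (l : ℕ) : Prop := ∀ G ∈ D, G.edges = l

/-- The `l`-deck of a deck `D`: all `l`-edge subgraphs of the graphs of `D`. -/
noncomputable def subDeck (D : Multiset FinGraph) (l : ℕ) : Multiset FinGraph :=
  D.bind fun G => G.subs l

/-- `s_D(H)`: the number of subgraphs isomorphic to `H` of the graphs in `D`. -/
noncomputable def sD (D : Multiset FinGraph) (H : FinGraph) : ℕ :=
  (D.map fun G => Set.ncard {G' : G.G.Subgraph | Nonempty (G'.coe ≃g H.G)}).sum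

/-- The coefficient `c^D_{U,l} = Σ_{G ∈ D} Σ_{H' ∈ G[l]} t(H', U)`. -/
noncomputable def coeff (D : Multiset FinGraph) (U : Kernel) (l : ℕ) : ℝ :=
  ((subDeck D l).map fun H => H.density U).sum

/-- All the coefficients `c^D_{U,2}, c^D_{U,4}, …, c^D_{U,l}` vanish. -/
def AllCoeffZero (D : Multiset FinGraph) (U : Kernel) (l : ℕ) : Prop :=
  ∀ k, Even k → 0 < k → k ≤ l → coeff D U k = 0

/-- Among `c^D_{U,2}, c^D_{U,4}, …, c^D_{U,l}` not all vanish and the first nonzero one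
is positive. -/
def FirstNonzeroPos (D : Multiset FinGraph) (U : Kernel) (l : ℕ) : Prop :=
  ∃ k, Even k ∧ 0 < k ∧ k ≤ l ∧ 0 < coeff D U k ∧
    ∀ j, Even j → 0 < j → j < k → coeff D U j = 0

/-- Among `c^D_{U,2}, c^D_{U,4}, …, c^D_{U,l}` not all vanish and the first nonzero one
is negative. -/
def FirstNonzeroNeg (D : Multiset FinGraph) (U : Kernel) (l : ℕ) : Prop :=
  ∃ k, Even k ∧ 0 < k ∧ k ≤ l ∧ coeff D U k < 0 ∧
    ∀ j, Even j → 0 < j → j < k → coeff D U j = 0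

def ClassI (D : Multiset FinGraph) (l : ℕ) : Prop :=
  ∀ U : Kernel, U.Nonzero → FirstNonzeroPos D U l

def ClassII (D : Multiset FinGraph) (l : ℕ) : Prop :=
  ∃ U : Kernel, FirstNonzeroNeg D U l

def ClassIII (D : Multiset FinGraph) (l : ℕ) : Prop :=
  (∃ U : Kernel, U.Nonzero ∧ AllCoeffZero D U l) ∧
  ∀ U : Kernel, AllCoeffZero D U l ∨ FirstNonzeroPos D U l

/-- The cycle `C_n` as a bundled graph. -/
def cycleF (n : ℕ) : FinGraph := FinGraph.of (SimpleGraph.cycleGraph n)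

/-- The path `P_n` with `n` edges as a bundled graph. -/
def pathF (n : ℕ) : FinGraph := FinGraph.of (SimpleGraph.pathGraph (n+1))

/-- Gluing two graphs by identifying the vertex `v` of `G` with the vertex `w` of `H`. -/
def glue {V W : Type} (G : SimpleGraph V) (H : SimpleGraph W) (v : V) (w : W) :
    SimpleGraph (V ⊕ {x : W // x ≠ w}) where
  Adj a b :=
    Sum.elim (fun a => Sum.elim (fun b => G.Adj a b) (fun b => a = v ∧ H.Adj w b.1) b)
             (fun a => Sum.elim (fun b => b = v ∧ H.Adj w a.1) (fun b => H.Adj a.1 b.1) b) a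
  symm := by
    refine ⟨?_⟩
    rintro (a | a) (b | b) h
    · exact G.adj_symm h
    · exact h
    · exact h
    · exact H.adj_symm h
  loopless := by
    refine ⟨?_⟩
    rintro (a | a) h
    · exact G.ne_of_adj h rfl
    · exact H.ne_of_adj h rfl

/-- Disjoint union of two simple graphs. -/
def disjSum {V W : Type} (G : SimpleGraph V) (H : SimpleGraph W) : SimpleGraph (V ⊕ W) where
  Adj a b :=
    Sum.elim (fun a => Sum.elim (fun b => G.Adj a b) (fun _ => False) b)
             (fun a => Sum.elim (fun _ => False) (fun b => H.Adj a b) b) a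
  symm := by
    refine ⟨?_⟩
    rintro (a | a) (b | b) h
    · exact G.adj_symm h
    · exact h.elim
    · exact h.elim
    · exact H.adj_symm h
  loopless := by
    refine ⟨?_⟩
    rintro (a | a) h
    · exact G.ne_of_adj h rfl
    · exact H.ne_of_adj h rfl

/-- Disjoint union `G ∪ H` of bundled graphs. -/
noncomputable def FinGraph.disjU (G H : FinGraph) : FinGraph := FinGraph.of (disjSum G.G H.G)

open Classical in
/-- `C_k ⊕ P_n ⊕ C_l`: two cycles joined by a path with `n` edges; for `n = 0` this is
`C_k ⊕ C_l`, two cycles sharing one vertex. (Junk value if `k = 0` or `l = 0`.) -/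
noncomputable def cpcF (k n l : ℕ) : FinGraph :=
  if h : 0 < k ∧ 0 < l then
    let A := glue (SimpleGraph.cycleGraph k) (SimpleGraph.pathGraph (n+1)) ⟨0, h.1⟩ 0
    let ep : Fin k ⊕ {x : Fin (n+1) // x ≠ 0} :=
      if hn : n = 0 then Sum.inl ⟨0, h.1⟩
      else Sum.inr ⟨Fin.last n, fun hc => hn (by simpa using congrArg Fin.val hc)⟩
    FinGraph.of (glue A (SimpleGraph.cycleGraph l) ep ⟨0, h.2⟩)
  else FinGraph.of (⊥ : SimpleGraph (Fin 0))

/-! Odd power sums of a finite family of reals are the odd moments of an integer-weighted point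
set, since a point `x` of weight `-1` contributes exactly like the point `-x`. So it suffices to
find integers `c_j` and `d > 0` with `∑_j c_j (j + 1)^(2i+3) = d δ_{i,i₀}` for `i < (k - 1)/2`.
The matrix `((j + 1)^(2i+3))` is a Vandermonde matrix in the squares `(j + 1)²` times a diagonal
matrix, hence invertible, and `det M • adj M` has integer entries and inverts `M` up to the
positive factor `(det M)²`. -/

open Matrix

theorem Matrix.exists_mulVec_eq_single_of_det_ne_zero {R n : Type*} [CommRing R] [LinearOrder R]
    [IsStrictOrderedRing R] [Fintype n] [DecidableEq n] {M : Matrix n n R} (hM : M.det ≠ 0)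
    (i₀ : n) : ∃ (c : n → R) (d : R), 0 < d ∧ M *ᵥ c = Pi.single i₀ d := by
  refine ⟨M.det • M.adjugate *ᵥ Pi.single i₀ 1, M.det ^ 2, pow_two_pos_of_ne_zero hM, ?_⟩
  rw [mulVec_smul, mulVec_mulVec, mul_adjugate, smul_mulVec, one_mulVec, smul_smul, ← sq,
    ← Pi.single_smul', smul_eq_mul, mul_one]

theorem Matrix.det_of_pow_mul_add {R : Type*} [CommRing R] {n : ℕ} (x : Fin n → R) (a b : ℕ) :
    (of fun i j : Fin n => x j ^ (a * i + b)).det =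
      (vandermonde fun j => x j ^ a).det * ∏ j, x j ^ b := by
  have : (of fun i j : Fin n => x j ^ (a * i + b)) =
      (vandermonde fun j => x j ^ a)ᵀ * diagonal fun j => x j ^ b := by
    ext i j
    simp [pow_add, pow_mul]
  rw [this, det_mul, det_transpose, det_diagonal]

theorem Matrix.det_of_pow_two_mul_add_ne_zero {R : Type*} [CommRing R] [LinearOrder R]
    [IsStrictOrderedRing R] {n : ℕ} {x : Fin n → R} (hx : Function.Injective x)
    (hpos : ∀ j, 0 < x j) (b : ℕ) : (of fun i j : Fin n => x j ^ (2 * i + b)).det ≠ 0 := by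
  rw [det_of_pow_mul_add]
  refine mul_ne_zero (det_vandermonde_ne_zero_iff.mpr fun j j' h => hx ?_)
    (Finset.prod_ne_zero_iff.mpr fun j _ => (pow_pos (hpos j) b).ne')
  exact (sq_eq_sq₀ (hpos j).le (hpos j').le).mp h

theorem Int.sign_pow_of_odd (a : ℤ) {l : ℕ} (hl : Odd l) : a.sign ^ l = a.sign := by
  rcases a.sign_trichotomy with h | h | h <;> simp [h, hl.neg_one_pow, hl.pos.ne']

theorem exists_odd_powerSum_eq_zsmul {R ι : Type*} [CommRing R] [Fintype ι] (c : ι → ℤ)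
    (x : ι → R) : ∃ (m : ℕ) (ω : Fin m → R),
      ∀ l, Odd l → ∑ i, ω i ^ l = ∑ j, c j • x j ^ l := by
  let ω : (Σ j, Fin (c j).natAbs) → R := fun p => (c p.1).sign • x p.1
  refine ⟨_, ω ∘ (Fintype.equivFin _).symm, fun l hl => ?_⟩
  rw [Function.comp_def, Equiv.sum_comp (Fintype.equivFin _).symm (ω · ^ l), Fintype.sum_sigma]
  refine Fintype.sum_congr _ _ fun j => ?_
  simp only [ω, Finset.sum_const, Finset.card_univ, Fintype.card_fin, smul_pow,
    Int.sign_pow_of_odd _ hl]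
  rw [← natCast_zsmul, smul_smul, mul_comm, Int.sign_mul_natAbs]

/-- For every pair of odd integers `k₀`, `k` with `3 ≤ k₀ ≤ k`, there exist
`m` and reals `ω₁, …, ω_m` whose `ℓ`-th power sums vanish for every odd `ℓ ≠ k₀` with
`3 ≤ ℓ ≤ k`, while the `k₀`-th power sum is positive. -/
theorem sums_of_powers_zero (k₀ k : ℕ) (hk₀ : Odd k₀) (hk : Odd k)
    (h3 : 3 ≤ k₀) (hle : k₀ ≤ k) :
    ∃ (m : ℕ) (ω : Fin m → ℝ),
      (∀ l : ℕ, Odd l → l ≠ k₀ → 3 ≤ l → l ≤ k → ∑ i, ω i ^ l = 0) ∧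
      0 < ∑ i, ω i ^ k₀ := by
  obtain ⟨t, rfl⟩ := hk
  obtain ⟨a, rfl⟩ := hk₀
  have hM := det_of_pow_two_mul_add_ne_zero (x := fun j : Fin t => (j : ℤ) + 1)
    (fun j j' h => Fin.ext (by simpa using h)) (fun j => by positivity) 3
  obtain ⟨c, d, hd, hc⟩ := exists_mulVec_eq_single_of_det_ne_zero hM ⟨a - 1, by omega⟩
  obtain ⟨m, ω, hω⟩ := exists_odd_powerSum_eq_zsmul c fun j : Fin t => (j : ℤ) + 1
  have hsum (l : ℕ) (hl : Odd l) (hl3 : 3 ≤ l) (hlk : l ≤ 2 * t + 1) :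
      ∑ s, (ω s : ℝ) ^ l = if l = 2 * a + 1 then (d : ℝ) else 0 := by
    obtain ⟨i, rfl⟩ : ∃ i : Fin t, l = 2 * (i : ℕ) + 3 :=
      ⟨⟨(l - 3) / 2, by omega⟩, by obtain ⟨b, rfl⟩ := hl; simp only; omega⟩
    have hi : ∑ s, ω s ^ (2 * (i : ℕ) + 3) =
        Pi.single (M := fun _ => ℤ) ⟨a - 1, by omega⟩ d i := by
      rw [hω _ hl, ← hc]
      simp only [mulVec, dotProduct, of_apply, smul_eq_mul, mul_comm]
    have hi₀ : (i : ℕ) = a - 1 ↔ 2 * (i : ℕ) + 3 = 2 * a + 1 := by omega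
    simp only [Pi.single_apply, Fin.ext_iff, hi₀] at hi
    exact_mod_cast hi
  refine ⟨m, fun s => ω s, fun l hl hne hl3 hlk => ?_, ?_⟩
  · rw [hsum l hl hl3 hlk, if_neg hne]
  · rw [hsum _ ⟨a, rfl⟩ h3 hle, if_pos rfl]
    exact_mod_cast hd
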